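/- arXiv:1805.02077 — 7 statements merged into one kernel-verified Lean document; each statement's English description precedes it below -/
import Mathlib

section
/- Let Γ be a countable group acting by measurable bijections on a standard Borel probability space (X, μ), where every s ∈ Γ acts non-singularly (the pushforward of μ under x ↦ s · x has the same null sets as μ), and assume the action is essentially free. Then for every finite subset F of Γ \ {e} there exist pairwise disjoint measurable sets X_1, …, X_{3^{|F|}} whose union is X such that μ(X_i ∩ (s · X_i)) = 0 for every i ∈ {1, …, 3^{|F|}} and every s ∈ F. -/
open Pointwise MeasureTheory

/-- A value in `Fin 3` different from both `a` and `b`. -/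
def avoid3 (a b : Fin 3) : Fin 3 :=
  if a ≠ 0 ∧ b ≠ 0 then 0 else if a ≠ 1 ∧ b ≠ 1 then 1 else 2

lemma avoid3_ne : ∀ a b : Fin 3, avoid3 a b ≠ a ∧ avoid3 a b ≠ b := by decide

/-- Greedy recoloring: given a countable coloring `c`, recolor with 3 colors,
processing color classes in order and avoiding the colors of the two neighbors. -/
def colG {X : Type*} (T T' : X → X) (c : X → ℕ) : ℕ → X → Fin 3
  | 0 => fun _ => 0
  | (n+1) => fun x =>
      if c x = n then avoid3 (colG T T' c n (T x)) (colG T T' c n (T' x))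
      else colG T T' c n x

lemma colG_meas {X : Type*} [MeasurableSpace X] {T T' : X → X} {c : X → ℕ}
    (hT : Measurable T) (hT' : Measurable T') (hc : Measurable c) :
    ∀ n, Measurable (colG T T' c n) := by
  intro n
  induction n with
  | zero => exact measurable_const
  | succ n ih =>
      have h1 : Measurable fun x =>
          avoid3 (colG T T' c n (T x)) (colG T T' c n (T' x)) :=
        (measurable_of_countable fun p : Fin 3 × Fin 3 => avoid3 p.1 p.2).comp
          ((ih.comp hT).prodMk (ih.comp hT'))
      exact Measurable.ite (hc (measurableSet_singleton n)) h1 ih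

lemma colG_stab {X : Type*} (T T' : X → X) (c : X → ℕ) :
    ∀ m x, c x < m → colG T T' c m x = colG T T' c (c x + 1) x := by
  intro m
  induction m with
  | zero => intro x hx; omega
  | succ m ih =>
      intro x hx
      rcases Nat.lt_or_ge (c x) m with h | h
      · have hstep : colG T T' c (m + 1) x = colG T T' c m x := by
          simp only [colG]
          rw [if_neg (Nat.ne_of_lt h)]
        rw [hstep]
        exact ih x h
      · have : c x = m := le_antisymm (Nat.lt_succ_iff.mp hx) h
        subst this
        rfl

/-- The key single-transformation lemma: given a countable separating family of
measurable sets and a measurable bijection `T`, there is a measurable 3-coloring `g`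
such that `g (T x) ≠ g x` whenever `T x ≠ x`. -/
lemma exists_three_coloring {X : Type*} [MeasurableSpace X]
    (U : ℕ → Set X) (hU : ∀ n, MeasurableSet (U n))
    (hsep : ∀ x y : X, x ≠ y → ∃ n, (x ∈ U n ∧ y ∉ U n) ∨ (x ∉ U n ∧ y ∈ U n))
    (T T' : X → X) (hT : Measurable T) (hT' : Measurable T')
    (hTT' : ∀ x, T' (T x) = x) (hT'T : ∀ x, T (T' x) = x) :
    ∃ g : X → Fin 3, Measurable g ∧ ∀ x, T x ≠ x → g (T x) ≠ g x := by
  classical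
  -- the countable family of independent sets
  set V : ℕ → Set X := fun k =>
    if Even k then (U (k/2) \ T ⁻¹' U (k/2)) else (T ⁻¹' U (k/2) \ U (k/2)) with hV
  have hVmeas : ∀ k, MeasurableSet (V k) := by
    intro k
    by_cases h : Even k <;>
      simp only [hV, h, if_true, if_false] <;>
      [exact (hU _).diff (hT (hU _)); exact (hT (hU _)).diff (hU _)]
  have hVind : ∀ k x, x ∈ V k → T x ∈ V k → False := by
    intro k x hx hTx
    by_cases h : Even k <;> simp only [hV, h, if_true, if_false] at hx hTx
    · exact hx.2 hTx.1
    · exact hTx.2 hx.1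
  have hVcov : ∀ x, T x ≠ x → ∃ k, x ∈ V k := by
    intro x hx
    obtain ⟨n, h | h⟩ := hsep x (T x) (Ne.symm hx)
    · refine ⟨2 * n, ?_⟩
      have he : Even (2 * n) := even_two_mul n
      have hn : (2 * n) / 2 = n := by omega
      simp only [hV, he, if_true, hn]
      exact ⟨h.1, h.2⟩
    · refine ⟨2 * n + 1, ?_⟩
      have he : ¬ Even (2 * n + 1) := by simp [Nat.even_add_one, Nat.even_mul]
      have hn : (2 * n + 1) / 2 = n := by omega
      simp only [hV, he, if_false, hn]
      exact ⟨h.2, h.1⟩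
  -- the total coloring family including fixed points as class 0
  set D : ℕ → Set X := fun k => Nat.casesOn k ((⋃ j, V j)ᶜ) V with hD
  have hDmeas : ∀ k, MeasurableSet (D k) := by
    rintro (_ | k)
    · exact (MeasurableSet.iUnion fun j => hVmeas j).compl
    · exact hVmeas k
  have hcov : ∀ x : X, ∃ k, x ∈ D k := by
    intro x
    by_cases h : x ∈ ⋃ j, V j
    · obtain ⟨j, hj⟩ := Set.mem_iUnion.mp h
      exact ⟨j + 1, hj⟩
    · exact ⟨0, h⟩
  set c : X → ℕ := fun x => Nat.find (hcov x) with hcdef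
  have hcmeas : Measurable c := measurable_find _ hDmeas
  have hcmem : ∀ x, x ∈ D (c x) := fun x => Nat.find_spec (hcov x)
  have hcne : ∀ x, T x ≠ x → c x ≠ 0 := by
    intro x hx h0
    have := hcmem x
    rw [h0] at this
    obtain ⟨k, hk⟩ := hVcov x hx
    exact this (Set.mem_iUnion.mpr ⟨k, hk⟩)
  have hcproper : ∀ x, T x ≠ x → c x ≠ c (T x) := by
    intro x hx heq
    have hTfix : T (T x) ≠ T x := by
      intro h
      apply hx
      have := congrArg T' h
      rwa [hTT', hTT'] at this
    have h1 : c x ≠ 0 := hcne x hx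
    obtain ⟨k, hk⟩ := Nat.exists_eq_succ_of_ne_zero h1
    have hmem1 : x ∈ V k := by have := hcmem x; rwa [hk] at this
    have hmem2 : T x ∈ V k := by have := hcmem (T x); rwa [← heq, hk] at this
    exact hVind k x hmem1 hmem2
  -- the 3-coloring
  refine ⟨fun x => colG T T' c (c x + 1) x, ?_, ?_⟩
  · apply measurable_to_countable'
    intro i
    have : (fun x => colG T T' c (c x + 1) x) ⁻¹' {i} =
        ⋃ n, {x | c x = n} ∩ (colG T T' c (n + 1)) ⁻¹' {i} := by
      ext x
      simp only [Set.mem_preimage, Set.mem_singleton_iff, Set.mem_iUnion,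
        Set.mem_inter_iff, Set.mem_setOf_eq]
      constructor
      · intro h; exact ⟨c x, rfl, h⟩
      · rintro ⟨n, rfl, h⟩; exact h
    rw [this]
    exact MeasurableSet.iUnion fun n =>
      (hcmeas (measurableSet_singleton n)).inter
        ((colG_meas hT hT' hcmeas (n + 1)) (measurableSet_singleton i))
  · intro x hx
    show colG T T' c (c (T x) + 1) (T x) ≠ colG T T' c (c x + 1) x
    have hcxTx := hcproper x hx
    rcases lt_or_gt_of_ne hcxTx with h | h
    · -- c x < c (T x) : T x chose a color avoiding g x
      have hdef : colG T T' c (c (T x) + 1) (T x) =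
          avoid3 (colG T T' c (c (T x)) (T (T x)))
                 (colG T T' c (c (T x)) (T' (T x))) := by
        simp [colG]
      rw [hdef, hTT']
      have hstab : colG T T' c (c (T x)) x = colG T T' c (c x + 1) x :=
        colG_stab T T' c (c (T x)) x h
      rw [hstab]
      exact (avoid3_ne _ _).2
    · -- c (T x) < c x : x chose a color avoiding g (T x)
      have hdef : colG T T' c (c x + 1) x =
          avoid3 (colG T T' c (c x) (T x)) (colG T T' c (c x) (T' x)) := by
        simp [colG]
      have hstab : colG T T' c (c x) (T x) = colG T T' c (c (T x) + 1) (T x) :=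
        colG_stab T T' c (c x) (T x) h
      rw [hdef, hstab]
      exact fun hcontra => (avoid3_ne _ _).1 hcontra.symm

/-- Lemma 3.1 (freeness lemma, measurable case): for an essentially free non-singular
action of a countable group `Γ` on a standard probability space `(X, μ)` and any finite
set `F ⊆ Γ \ {e}`, there is a measurable partition `X = X_1 ⊔ ⋯ ⊔ X_{3^{|F|}}` with
`μ(X_i ∩ s • X_i) = 0` for all `i` and all `s ∈ F`. -/
theorem essentially_free_partition
    (Γ : Type*) [Group Γ] [Countable Γ]
    (X : Type*) [MeasurableSpace X] [StandardBorelSpace X]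
    (μ : Measure X) [IsProbabilityMeasure μ]
    [MulAction Γ X]
    (hmeas : ∀ s : Γ, Measurable fun x : X => s • x)
    (hns : ∀ s : Γ, ∀ A : Set X, MeasurableSet A →
      (μ A = 0 ↔ μ ((fun x : X => s • x) ⁻¹' A) = 0))
    (hfree : ∀ s : Γ, s ≠ 1 → μ {x : X | s • x = x} = 0)
    (F : Finset Γ) (hF : (1 : Γ) ∉ F) :
    ∃ A : Fin (3 ^ F.card) → Set X,
      (∀ i, MeasurableSet (A i)) ∧
      Pairwise (Function.onFun Disjoint A) ∧
      (⋃ i, A i) = Set.univ ∧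
      ∀ i, ∀ s ∈ F, μ (A i ∩ s • A i) = 0 := by
  classical
  -- a countable separating family of measurable sets
  obtain ⟨f, hf⟩ := exists_measurableEmbedding_real X
  obtain ⟨r, hr⟩ := exists_surjective_nat ℚ
  set U : ℕ → Set X := fun n => f ⁻¹' (Set.Iio ((r n : ℚ) : ℝ)) with hUdef
  have hUmeas : ∀ n, MeasurableSet (U n) := fun n =>
    hf.measurable measurableSet_Iio
  have hsep : ∀ x y : X, x ≠ y →
      ∃ n, (x ∈ U n ∧ y ∉ U n) ∨ (x ∉ U n ∧ y ∈ U n) := by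
    intro x y hxy
    have hfxy : f x ≠ f y := fun h => hxy (hf.injective h)
    rcases lt_or_gt_of_ne hfxy with h | h
    · obtain ⟨q, hq1, hq2⟩ := exists_rat_btwn h
      obtain ⟨n, rfl⟩ := hr q
      refine ⟨n, Or.inl ⟨?_, ?_⟩⟩
      · simpa only [hUdef, Set.mem_preimage, Set.mem_Iio] using hq1
      · simp only [hUdef, Set.mem_preimage, Set.mem_Iio]
        exact not_lt.mpr hq2.le
    · obtain ⟨q, hq1, hq2⟩ := exists_rat_btwn h
      obtain ⟨n, rfl⟩ := hr q
      refine ⟨n, Or.inr ⟨?_, ?_⟩⟩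
      · simp only [hUdef, Set.mem_preimage, Set.mem_Iio]
        exact not_lt.mpr hq2.le
      · simpa only [hUdef, Set.mem_preimage, Set.mem_Iio] using hq1
  -- for each `s ∈ F`, a measurable 3-coloring
  have key : ∀ s : Γ, ∃ g : X → Fin 3, Measurable g ∧
      ∀ x, s • x ≠ x → g (s • x) ≠ g x := by
    intro s
    exact exists_three_coloring U hUmeas hsep (fun x => s • x) (fun x => s⁻¹ • x)
      (hmeas s) (hmeas s⁻¹) (fun x => inv_smul_smul s x) (fun x => smul_inv_smul s x)
  choose g hgm hgp using fun s : {s : Γ // s ∈ F} => key s.1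
  -- the partition indexed by functions `F → Fin 3`
  have hcard : Fintype.card ({s : Γ // s ∈ F} → Fin 3) = 3 ^ F.card := by
    rw [Fintype.card_fun, Fintype.card_fin, Fintype.card_coe]
  set e : ({s : Γ // s ∈ F} → Fin 3) ≃ Fin (3 ^ F.card) :=
    Fintype.equivFinOfCardEq hcard with he
  refine ⟨fun i => {x | (fun s => g s x) = e.symm i}, ?_, ?_, ?_, ?_⟩
  · intro i
    show MeasurableSet {x | (fun s => g s x) = e.symm i}
    have : {x | (fun s => g s x) = e.symm i} =
        ⋂ s : {s : Γ // s ∈ F}, (g s) ⁻¹' {e.symm i s} := by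
      ext x
      simp only [Set.mem_setOf_eq, Set.mem_iInter, Set.mem_preimage,
        Set.mem_singleton_iff, funext_iff]
    rw [this]
    exact MeasurableSet.iInter fun s => (hgm s) (measurableSet_singleton _)
  · intro i j hij
    rw [Function.onFun, Set.disjoint_left]
    intro x hxi hxj
    apply hij
    have : e.symm i = e.symm j := by
      rw [← hxi, ← hxj]
    exact e.symm.injective this
  · ext x
    simp only [Set.mem_iUnion, Set.mem_univ, iff_true, Set.mem_setOf_eq]
    exact ⟨e (fun s => g s x), by simp⟩
  · intro i s hs
    set σ : {s : Γ // s ∈ F} := ⟨s, hs⟩ with hσ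
    have hsub : {x | (fun t => g t x) = e.symm i} ∩
        s • {x | (fun t => g t x) = e.symm i} ⊆ {x : X | s • x = x} := by
      intro x ⟨hx1, hx2⟩
      rw [Set.mem_smul_set_iff_inv_smul_mem] at hx2
      simp only [Set.mem_setOf_eq] at hx1 hx2 ⊢
      by_contra hfix
      have hy : s • (s⁻¹ • x) ≠ s⁻¹ • x := by
        rw [smul_inv_smul]
        intro h
        apply hfix
        conv_lhs => rw [h]
        rw [smul_inv_smul]
      have hgne := hgp σ (s⁻¹ • x) hy
      rw [smul_inv_smul] at hgne
      apply hgne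
      have h1 : g σ x = e.symm i σ := congrFun hx1 σ
      have h2 : g σ (s⁻¹ • x) = e.symm i σ := congrFun hx2 σ
      rw [h1, h2]
    exact measure_mono_null hsub (hfree s (fun h => hF (h ▸ hs)))
end

section
/- Let (X, μ) be a standard Borel probability space and let T : X → X be a measurable bijection that is non-singular (T maps μ-null sets to μ-null sets and conversely) and essentially free, i.e. μ({x ∈ X : T x = x}) = 0. Then there exists a measurable set A ⊆ X such that μ(A ∩ T(A)) = 0 and μ(X \ (T(A) ∪ A ∪ T⁻¹(A))) = 0. -/
/-!
Choose a countable separating family `(Bₘ)` of measurable sets. Every non-fixed point `x` lies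
in one of the sets `s \ T⁻¹(s)` with `s = Bₘ` or `s = Bₘᶜ`, and each of these is wandering:
it is disjoint from its `T`-image. Run through these countably many wandering pieces `Cₙ` and,
at step `n`, add to the current wandering set `A` the part of `Cₙ` not yet met by
`T(A) ∪ A ∪ T⁻¹(A)`; this keeps `A` wandering, and afterwards `Cₙ` is covered. The increasing
union is then a wandering set whose neighbourhood `T(A) ∪ A ∪ T⁻¹(A)` misses only fixed points,
a null set by essential freeness.
-/

open MeasureTheory Set Function

namespace Wandering

variable {X : Type*} {T : X → X}

theorem disjoint_image_iUnion_of_monotone {ι : Type*} [Preorder ι] [IsDirected ι (· ≤ ·)]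
    {A : ι → Set X} (hA : Monotone A) (h : ∀ i, Disjoint (A i) (T '' A i)) :
    Disjoint (⋃ i, A i) (T '' ⋃ i, A i) := by
  simp only [image_iUnion, disjoint_iUnion_left, disjoint_iUnion_right]
  intro j i
  obtain ⟨k, hik, hjk⟩ := exists_ge_ge i j
  exact (h k).mono (hA hik) (image_mono (hA hjk))

theorem disjoint_diff_preimage_image (s : Set X) :
    Disjoint (s \ T ⁻¹' s) (T '' (s \ T ⁻¹' s)) := by
  rw [disjoint_left]
  rintro _ ⟨hxs, -⟩ ⟨y, ⟨-, hy⟩, rfl⟩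
  exact hy hxs

variable (T) in
def greedyStep (C A : Set X) : Set X :=
  A ∪ (C \ (T '' A ∪ A ∪ T ⁻¹' A))

theorem disjoint_image_greedyStep {A C : Set X} (hA : Disjoint A (T '' A))
    (hC : Disjoint C (T '' C)) :
    Disjoint (greedyStep T C A) (T '' greedyStep T C A) := by
  rw [disjoint_left]
  rintro _ (hxA | ⟨hxC, hxA⟩) ⟨y, hyA | ⟨hyC, hyA⟩, rfl⟩
  · exact disjoint_left.1 hA hxA (mem_image_of_mem T hyA)
  · exact hyA (Or.inr hxA)
  · exact hxA (Or.inl (Or.inl (mem_image_of_mem T hyA)))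
  · exact disjoint_left.1 hC hxC (mem_image_of_mem T hyC)

theorem subset_greedyStep_nbhd (C A : Set X) :
    C ⊆ T '' greedyStep T C A ∪ greedyStep T C A ∪ T ⁻¹' greedyStep T C A := by
  intro x hxC
  by_cases hx : x ∈ T '' A ∪ A ∪ T ⁻¹' A
  · have hA : A ⊆ greedyStep T C A := subset_union_left
    exact (by gcongr : T '' A ∪ A ∪ T ⁻¹' A ⊆ _) hx
  · exact Or.inl (Or.inr (Or.inr ⟨hxC, hx⟩))

theorem measurableSet_greedyStep [MeasurableSpace X] (hT : MeasurableEmbedding T)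
    {C A : Set X} (hC : MeasurableSet C) (hA : MeasurableSet A) :
    MeasurableSet (greedyStep T C A) :=
  hA.union (hC.diff (((hT.measurableSet_image.2 hA).union hA).union (hT.measurable hA)))

variable (T) in
def greedySeq (C : ℕ → Set X) : ℕ → Set X
  | 0 => ∅
  | n + 1 => greedyStep T (C n) (greedySeq C n)

variable {C : ℕ → Set X}

theorem monotone_greedySeq : Monotone (greedySeq T C) :=
  monotone_nat_of_le_succ fun _ => subset_union_left

theorem disjoint_image_greedySeq (hC : ∀ n, Disjoint (C n) (T '' C n)) (n : ℕ) :
    Disjoint (greedySeq T C n) (T '' greedySeq T C n) := by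
  induction n with
  | zero => simp [greedySeq]
  | succ n ih => exact disjoint_image_greedyStep ih (hC n)

theorem measurableSet_greedySeq [MeasurableSpace X] (hT : MeasurableEmbedding T)
    (hC : ∀ n, MeasurableSet (C n)) (n : ℕ) : MeasurableSet (greedySeq T C n) := by
  induction n with
  | zero => exact MeasurableSet.empty
  | succ n ih => exact measurableSet_greedyStep hT (hC n) ih

theorem subset_iUnion_greedySeq_nbhd (n : ℕ) :
    C n ⊆ T '' (⋃ k, greedySeq T C k) ∪ (⋃ k, greedySeq T C k) ∪
      T ⁻¹' (⋃ k, greedySeq T C k) := by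
  have hsub : greedySeq T C (n + 1) ⊆ ⋃ k, greedySeq T C k := subset_iUnion _ _
  refine (subset_greedyStep_nbhd (T := T) (C n) (greedySeq T C n)).trans ?_
  gcongr <;> exact hsub

theorem exists_wandering_cover_of_seq [MeasurableSpace X] (hT : MeasurableEmbedding T)
    (hCm : ∀ n, MeasurableSet (C n)) (hC : ∀ n, Disjoint (C n) (T '' C n)) :
    ∃ A, MeasurableSet A ∧ Disjoint A (T '' A) ∧ ⋃ n, C n ⊆ T '' A ∪ A ∪ T ⁻¹' A :=
  ⟨⋃ k, greedySeq T C k, .iUnion (measurableSet_greedySeq hT hCm),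
    disjoint_image_iUnion_of_monotone monotone_greedySeq (disjoint_image_greedySeq hC),
    iUnion_subset subset_iUnion_greedySeq_nbhd⟩

theorem exists_seq_wandering_cover_compl_fixedPoints [MeasurableSpace X]
    [MeasurableSpace.CountablySeparated X] (hT : Measurable T) :
    ∃ C : ℕ → Set X, (∀ n, MeasurableSet (C n)) ∧ (∀ n, Disjoint (C n) (T '' C n)) ∧
      (fixedPoints T)ᶜ ⊆ ⋃ n, C n := by
  obtain ⟨B, hBm, hBsep⟩ := exists_seq_separating X MeasurableSet.empty univ
  let s : Bool × ℕ → Set X := fun p => if p.1 then B p.2 else (B p.2)ᶜ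
  have hs : ∀ p, MeasurableSet (s p) := fun ⟨b, m⟩ => by
    cases b
    exacts [(hBm m).compl, hBm m]
  let e := Equiv.boolProdNatEquivNat.symm
  refine ⟨fun n => s (e n) \ T ⁻¹' s (e n), fun n => (hs _).diff (hT (hs _)),
    fun n => disjoint_diff_preimage_image _, fun x hx => mem_iUnion.2 ?_⟩
  obtain ⟨m, hm⟩ : ∃ m, ¬(x ∈ B m ↔ T x ∈ B m) := by
    by_contra! h
    exact hx (hBsep _ trivial _ trivial h).symm
  by_cases hxm : x ∈ B m
  · exact ⟨e.symm (true, m), by simp_all [s]⟩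
  · exact ⟨e.symm (false, m), by simp_all [s]⟩

end Wandering

open Wandering in
theorem exists_maximal_wandering_set_general
    (X : Type*) [MeasurableSpace X] [StandardBorelSpace X]
    (μ : Measure X)
    (T : X → X) (hTmeas : Measurable T) (hTbij : Function.Bijective T)
    (hfree : μ {x : X | T x = x} = 0) :
    ∃ A : Set X, MeasurableSet A ∧ μ (A ∩ T '' A) = 0 ∧
      μ (Set.univ \ (T '' A ∪ A ∪ T ⁻¹' A)) = 0 := by
  obtain ⟨C, hCm, hC, hcover⟩ := exists_seq_wandering_cover_compl_fixedPoints hTmeas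
  obtain ⟨A, hAm, hA, hAC⟩ :=
    exists_wandering_cover_of_seq (hTmeas.measurableEmbedding hTbij.injective) hCm hC
  refine ⟨A, hAm, by simp [hA.inter_eq], measure_mono_null ?_ hfree⟩
  rw [← compl_eq_univ_sdiff, compl_subset_comm]
  exact hcover.trans hAC

/-- For a non-singular essentially free measurable bijection `T` of a standard
probability space `(X, μ)` there is a measurable set `A` with `μ(A ∩ T(A)) = 0`
and `T(A) ∪ A ∪ T⁻¹(A)` conull. -/
theorem exists_maximal_wandering_set
    (X : Type*) [MeasurableSpace X] [StandardBorelSpace X]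
    (μ : Measure X) [IsProbabilityMeasure μ]
    (T : X → X) (hTmeas : Measurable T) (hTbij : Function.Bijective T)
    (hns : ∀ A : Set X, MeasurableSet A → (μ A = 0 ↔ μ (T '' A) = 0))
    (hfree : μ {x : X | T x = x} = 0) :
    ∃ A : Set X, MeasurableSet A ∧ μ (A ∩ T '' A) = 0 ∧
      μ (Set.univ \ (T '' A ∪ A ∪ T ⁻¹' A)) = 0 :=
  exists_maximal_wandering_set_general X μ T hTmeas hTbij hfree
end

section
/- Let M be a unital C*-algebra and let φ be a state on M. Let p_1, …, p_n be pairwise orthogonal projections in M (so p_i = p_i* = p_i² and p_i p_j = 0 for i ≠ j) each lying in the centralizer of φ. Then for every a ∈ M, setting b = Σ_{i=1}^n p_i a p_i, one has φ(b* b) ≤ φ(a* a). -/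
open scoped ComplexOrder

/-- (Computation in Lemma 3.2.) Let `φ` be a state on a unital C*-algebra `M` and let
`p_1, …, p_n` be pairwise orthogonal projections in the centralizer of `φ`. Then for every
`a ∈ M`, the element `b = Σ_i p_i a p_i` satisfies `φ(b* b) ≤ φ(a* a)`. -/
theorem state_centralizer_pinching
    (M : Type*) [CStarAlgebra M]
    (φ : M →ₗ[ℂ] ℂ)
    (hpos : ∀ x : M, 0 ≤ φ (star x * x))
    (hone : φ 1 = 1)
    (n : ℕ) (p : Fin n → M)
    (hproj : ∀ i, star (p i) = p i ∧ p i * p i = p i)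
    (horth : ∀ i j, i ≠ j → p i * p j = 0)
    (hcent : ∀ i, ∀ x : M, φ (p i * x) = φ (x * p i))
    (a : M) :
    φ (star (∑ i, p i * a * p i) * (∑ i, p i * a * p i)) ≤ φ (star a * a) := by
  classical
  set q : M := ∑ i, p i with hq
  have hq2 : q * q = q := by
    rw [hq, Finset.sum_mul_sum]
    refine Finset.sum_congr rfl fun i _ => ?_
    rw [Finset.sum_eq_single i (fun j _ hj => horth i j (Ne.symm hj))
      (fun h => absurd (Finset.mem_univ i) h)]
    exact (hproj i).2
  have hcq : ∀ x : M, φ (q * x) = φ (x * q) := by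
    intro x
    rw [hq, Finset.sum_mul, Finset.mul_sum, map_sum, map_sum]
    exact Finset.sum_congr rfl fun i _ => hcent i x
  -- star of each summand
  have hstar : star (∑ i, p i * a * p i) = ∑ i, p i * star a * p i := by
    rw [star_sum]
    exact Finset.sum_congr rfl fun i _ => by
      simp [star_mul, (hproj i).1, mul_assoc]
  have key : ∀ i j : Fin n, (p i * star a * p i) * (p j * a * p j)
      = if i = j then p i * star a * p i * a * p i else 0 := by
    intro i j
    by_cases h : i = j
    · subst h
      rw [if_pos rfl]
      simp only [mul_assoc]
      rw [← mul_assoc (p i) (p i), (hproj i).2]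
    · rw [if_neg h]
      simp only [mul_assoc]
      rw [← mul_assoc (p i) (p j), horth i j h]
      simp
  have hbb : star (∑ i, p i * a * p i) * (∑ i, p i * a * p i)
      = ∑ i, p i * star a * p i * a * p i := by
    rw [hstar, Finset.sum_mul_sum]
    refine Finset.sum_congr rfl fun i _ => ?_
    rw [Finset.sum_congr rfl fun j _ => key i j]
    simp
  -- step: for each i, φ (p i * star a * p i * a * p i) ≤ φ (star a * a * p i)
  have step : ∀ i, φ (p i * star a * p i * a * p i) ≤ φ (star a * a * p i) := by
    intro i
    -- first: φ (p i * star a * p i * a * p i) = φ (star a * p i * a * p i)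
    have e1 : φ (p i * star a * p i * a * p i) = φ (star a * p i * a * p i) := by
      have := hcent i (star a * p i * a * p i)
      calc φ (p i * star a * p i * a * p i)
          = φ (p i * (star a * p i * a * p i)) := by noncomm_ring
        _ = φ (star a * p i * a * p i * p i) := this
        _ = φ (star a * p i * a * p i) := by rw [mul_assoc, (hproj i).2]
    -- positivity: with c = (1 - p i) * a * p i
    have hc := hpos ((1 - p i) * (a * p i))
    have e2 : star ((1 - p i) * (a * p i)) * ((1 - p i) * (a * p i))
        = p i * (star a * ((1 - p i) * (a * p i))) := by
      have hsa : star (1 - p i : M) = 1 - p i := by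
        simp [star_sub, (hproj i).1]
      have h1 : (1 - p i) * (1 - p i) = (1 - p i : M) := by
        have := (hproj i).2
        noncomm_ring [this]
      calc star ((1 - p i) * (a * p i)) * ((1 - p i) * (a * p i))
          = (star (p i) * star a * ((1 - p i) * (1 - p i))) * (a * p i) := by
            simp only [star_mul, hsa, (hproj i).1]; noncomm_ring
        _ = p i * (star a * ((1 - p i) * (a * p i))) := by
            rw [h1, (hproj i).1]; noncomm_ring
    rw [e2] at hc
    have e3 : φ (p i * (star a * ((1 - p i) * (a * p i))))
        = φ (star a * a * p i) - φ (star a * p i * a * p i) := by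
      rw [hcent i (star a * ((1 - p i) * (a * p i)))]
      have : star a * ((1 - p i) * (a * p i)) * p i
          = star a * a * p i - star a * p i * a * p i := by
        have h2 := (hproj i).2
        noncomm_ring [h2]
      rw [this, map_sub]
    rw [e3] at hc
    rw [e1]
    exact sub_nonneg.mp hc
  -- final step: φ (star a * a * q) ≤ φ (star a * a)
  have hqself : star q = q := by
    rw [hq, star_sum]; exact Finset.sum_congr rfl fun i _ => (hproj i).1
  have hcq' : ∀ x : M, φ ((1 - q) * x) = φ (x * (1 - q)) := by
    intro x
    rw [sub_mul, one_mul, mul_sub, mul_one, map_sub, map_sub, hcq]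
  have hd := hpos (a * (1 - q))
  have e4 : star (a * (1 - q)) * (a * (1 - q))
      = (1 - q) * (star a * (a * (1 - q))) := by
    have hsq : star (1 - q : M) = 1 - q := by simp [star_sub, hqself]
    rw [star_mul, hsq]; noncomm_ring
  have e5 : φ ((1 - q) * (star a * (a * (1 - q)))) = φ (star a * a) - φ (star a * a * q) := by
    rw [hcq' (star a * (a * (1 - q)))]
    have h1q : (1 - q) * (1 - q) = (1 - q : M) := by noncomm_ring [hq2]
    have : star a * (a * (1 - q)) * (1 - q) = star a * a - star a * a * q := by
      rw [mul_assoc, mul_assoc a, h1q]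
      noncomm_ring
    rw [this, map_sub]
  rw [e4, e5] at hd
  have last : φ (star a * a * q) ≤ φ (star a * a) := sub_nonneg.mp hd
  have sumq : (∑ i, φ (star a * a * p i)) = φ (star a * a * q) := by
    rw [hq, Finset.mul_sum, map_sum]
  calc φ (star (∑ i, p i * a * p i) * (∑ i, p i * a * p i))
      = ∑ i, φ (p i * star a * p i * a * p i) := by rw [hbb, map_sum]
    _ ≤ ∑ i, φ (star a * a * p i) := Finset.sum_le_sum fun i _ => step i
    _ = φ (star a * a * q) := sumq
    _ ≤ φ (star a * a) := last
end

section
/- Let B be a C*-algebra, let A be a norm-closed *-subalgebra of B, and let r ∈ B be a projection (r = r* = r²) such that r a ∈ A and a r ∈ A for all a ∈ A. Let C be a norm-closed *-subalgebra of B satisfying: r a r ∈ C for every a ∈ A, and r c r = c for every c ∈ C. Let D denote the smallest norm-closed *-subalgebra of B containing A ∪ C. Then {r d r : d ∈ D} = C. Consequently, if C and C' are two norm-closed *-subalgebras of B satisfying these hypotheses and generating together with A the same norm-closed *-subalgebra of B, then C = C'. -/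
open NonUnitalStarAlgebra in
lemma corner_aux
    (B : Type*) [NonUnitalCStarAlgebra B]
    (A : NonUnitalStarSubalgebra ℂ B)
    (r : B) (hr : star r = r ∧ r * r = r)
    (C : NonUnitalStarSubalgebra ℂ B) (hC : IsClosed (C : Set B))
    (hAC : ∀ a ∈ A, r * a * r ∈ C)
    (hCr : ∀ c ∈ C, r * c * r = c) :
    {x : B | ∃ d ∈ (adjoin ℂ ((A : Set B) ∪ (C : Set B))).topologicalClosure,
        x = r * d * r} = (C : Set B) := by
  obtain ⟨hrs, hrr⟩ := hr
  have hcr : ∀ c ∈ C, c * r = c := by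
    intro c hc
    conv_lhs => rw [← hCr c hc]
    rw [mul_assoc, mul_assoc, hrr, ← mul_assoc, hCr c hc]
  have hrc : ∀ c ∈ C, r * c = c := by
    intro c hc
    conv_lhs => rw [← hCr c hc]
    rw [← mul_assoc, ← mul_assoc, hrr, hCr c hc]
  have hCAC : ∀ c ∈ C, ∀ a ∈ A, ∀ c' ∈ C, c * a * c' ∈ C := by
    intro c hc a ha c' hc'
    have h : c * a * c' = c * (r * a * r) * c' := by
      conv_lhs => rw [← hcr c hc, ← hrc c' hc']
      noncomm_ring
    rw [h]
    exact mul_mem (mul_mem hc (hAC a ha)) hc'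
  -- the set S of "normal forms"
  set S : Set B := {x | x ∈ A ∨ x ∈ C ∨ (∃ a ∈ A, ∃ c ∈ C, x = a * c) ∨
      (∃ c ∈ C, ∃ a ∈ A, x = c * a) ∨ (∃ a ∈ A, ∃ c ∈ C, ∃ a' ∈ A, x = a * c * a')} with hSdef
  have hA_S : ∀ a ∈ A, ∀ y ∈ S, a * y ∈ S := by
    rintro a ha y (hy | hy | ⟨a', ha', c, hc, rfl⟩ | ⟨c, hc, a', ha', rfl⟩ |
      ⟨a', ha', c, hc, a'', ha'', rfl⟩)
    · exact Or.inl (mul_mem ha hy)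
    · exact Or.inr (Or.inr (Or.inl ⟨a, ha, y, hy, rfl⟩))
    · exact Or.inr (Or.inr (Or.inl ⟨a * a', mul_mem ha ha', c, hc, by noncomm_ring⟩))
    · exact Or.inr (Or.inr (Or.inr (Or.inr ⟨a, ha, c, hc, a', ha', by noncomm_ring⟩)))
    · exact Or.inr (Or.inr (Or.inr (Or.inr ⟨a * a', mul_mem ha ha', c, hc, a'', ha'',
        by noncomm_ring⟩)))
  have hC_S : ∀ c ∈ C, ∀ y ∈ S, c * y ∈ S := by
    rintro c hc y (hy | hy | ⟨a, ha, c', hc', rfl⟩ | ⟨c', hc', a, ha, rfl⟩ |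
      ⟨a, ha, c', hc', a', ha', rfl⟩)
    · exact Or.inr (Or.inr (Or.inr (Or.inl ⟨c, hc, y, hy, rfl⟩)))
    · exact Or.inr (Or.inl (mul_mem hc hy))
    · refine Or.inr (Or.inl ?_)
      have : c * (a * c') = c * a * c' := by noncomm_ring
      rw [this]; exact hCAC c hc a ha c' hc'
    · exact Or.inr (Or.inr (Or.inr (Or.inl ⟨c * c', mul_mem hc hc', a, ha, by noncomm_ring⟩)))
    · refine Or.inr (Or.inr (Or.inr (Or.inl ⟨c * a * c', hCAC c hc a ha c' hc', a', ha', ?_⟩)))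
      noncomm_ring
  have hS_mul : ∀ x ∈ S, ∀ y ∈ S, x * y ∈ S := by
    rintro x (hx | hx | ⟨a, ha, c, hc, rfl⟩ | ⟨c, hc, a, ha, rfl⟩ | ⟨a, ha, c, hc, a', ha', rfl⟩)
      y hy
    · exact hA_S x hx y hy
    · exact hC_S x hx y hy
    · have : a * c * y = a * (c * y) := by noncomm_ring
      rw [this]; exact hA_S a ha _ (hC_S c hc y hy)
    · have : c * a * y = c * (a * y) := by noncomm_ring
      rw [this]; exact hC_S c hc _ (hA_S a ha y hy)
    · have : a * c * a' * y = a * (c * (a' * y)) := by noncomm_ring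
      rw [this]; exact hA_S a ha _ (hC_S c hc _ (hA_S a' ha' y hy))
  have hS_star : ∀ x ∈ S, star x ∈ S := by
    rintro x (hx | hx | ⟨a, ha, c, hc, rfl⟩ | ⟨c, hc, a, ha, rfl⟩ | ⟨a, ha, c, hc, a', ha', rfl⟩)
    · exact Or.inl (star_mem hx)
    · exact Or.inr (Or.inl (star_mem hx))
    · exact Or.inr (Or.inr (Or.inr (Or.inl ⟨star c, star_mem hc, star a, star_mem ha,
        by rw [star_mul]⟩)))
    · exact Or.inr (Or.inr (Or.inl ⟨star a, star_mem ha, star c, star_mem hc, by rw [star_mul]⟩))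
    · exact Or.inr (Or.inr (Or.inr (Or.inr ⟨star a', star_mem ha', star c, star_mem hc, star a,
        star_mem ha, by rw [star_mul, star_mul]; noncomm_ring⟩)))
  have hrSr : ∀ x ∈ S, r * x * r ∈ C := by
    rintro x (hx | hx | ⟨a, ha, c, hc, rfl⟩ | ⟨c, hc, a, ha, rfl⟩ | ⟨a, ha, c, hc, a', ha', rfl⟩)
    · exact hAC x hx
    · rw [hCr x hx]; exact hx
    · have h : r * (a * c) * r = (r * a * r) * c := by
        calc r * (a * c) * r = r * a * (c * r) := by noncomm_ring
          _ = r * a * c := by rw [hcr c hc]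
          _ = r * a * (r * c) := by rw [hrc c hc]
          _ = (r * a * r) * c := by noncomm_ring
      rw [h]; exact mul_mem (hAC a ha) hc
    · have h : r * (c * a) * r = c * (r * a * r) := by
        calc r * (c * a) * r = (r * c) * (a * r) := by noncomm_ring
          _ = c * (a * r) := by rw [hrc c hc]
          _ = (c * r) * (a * r) := by rw [hcr c hc]
          _ = c * (r * a * r) := by noncomm_ring
      rw [h]; exact mul_mem hc (hAC a ha)
    · have h : r * (a * c * a') * r = (r * a * r) * c * (r * a' * r) := by
        conv_lhs => rw [← hCr c hc]
        noncomm_ring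
      rw [h]; exact mul_mem (mul_mem (hAC a ha) hc) (hAC a' ha')
  -- the span of S is closed under multiplication and star
  have hM_mul : ∀ x ∈ Submodule.span ℂ S, ∀ y ∈ Submodule.span ℂ S,
      x * y ∈ Submodule.span ℂ S := by
    intro x hx
    induction hx using Submodule.span_induction with
    | mem z hz =>
      intro y hy
      induction hy using Submodule.span_induction with
      | mem w hw => exact Submodule.subset_span (hS_mul z hz w hw)
      | zero => simpa using Submodule.zero_mem _
      | add u v _ _ hu hv => rw [mul_add]; exact Submodule.add_mem _ hu hv
      | smul t u _ hu => rw [mul_smul_comm]; exact Submodule.smul_mem _ _ hu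
    | zero => intro y hy; simpa using Submodule.zero_mem _
    | add u v _ _ hu hv => intro y hy; rw [add_mul]; exact Submodule.add_mem _ (hu y hy) (hv y hy)
    | smul t u _ hu => intro y hy; rw [smul_mul_assoc]; exact Submodule.smul_mem _ _ (hu y hy)
  have hM_star : ∀ x ∈ Submodule.span ℂ S, star x ∈ Submodule.span ℂ S := by
    intro x hx
    induction hx using Submodule.span_induction with
    | mem z hz => exact Submodule.subset_span (hS_star z hz)
    | zero => simpa using Submodule.zero_mem _
    | add u v _ _ hu hv => rw [star_add]; exact Submodule.add_mem _ hu hv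
    | smul t u _ hu => rw [star_smul]; exact Submodule.smul_mem _ _ hu
  have hrMr : ∀ x ∈ Submodule.span ℂ S, r * x * r ∈ C := by
    intro x hx
    induction hx using Submodule.span_induction with
    | mem z hz => exact hrSr z hz
    | zero => simpa using zero_mem C
    | add u v _ _ hu hv =>
      have : r * (u + v) * r = r * u * r + r * v * r := by noncomm_ring
      rw [this]; exact add_mem hu hv
    | smul t u _ hu =>
      have : r * (t • u) * r = t • (r * u * r) := by
        rw [mul_smul_comm, smul_mul_assoc]
      rw [this]; exact SMulMemClass.smul_mem t hu
  -- adjoin is contained in span S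
  have hadj : ∀ x ∈ adjoin ℂ ((A : Set B) ∪ (C : Set B)), x ∈ Submodule.span ℂ S := by
    intro x hx
    induction hx using NonUnitalStarAlgebra.adjoin_induction with
    | mem z hz =>
      refine Submodule.subset_span ?_
      rcases hz with hz | hz
      · exact Or.inl hz
      · exact Or.inr (Or.inl hz)
    | add u v _ _ hu hv => exact Submodule.add_mem _ hu hv
    | zero => exact Submodule.zero_mem _
    | mul u v _ _ hu hv => exact hM_mul u hu v hv
    | smul t u _ hu => exact Submodule.smul_mem _ _ hu
    | star u _ hu => exact hM_star u hu
  -- compression of the closure lands in C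
  have hcont : Continuous (fun y : B => r * y * r) :=
    (continuous_const.mul continuous_id).mul continuous_const
  have hkey : ∀ x ∈ (adjoin ℂ ((A : Set B) ∪ (C : Set B))).topologicalClosure,
      r * x * r ∈ C := by
    intro x hx
    have hx' : x ∈ closure ((adjoin ℂ ((A : Set B) ∪ (C : Set B)) : Set B)) := hx
    have : (fun y : B => r * y * r) x ∈ closure (C : Set B) :=
      map_mem_closure (f := fun y : B => r * y * r) hcont hx' (fun y hy => hrMr y (hadj y hy))
    simp only at this
    rwa [hC.closure_eq] at this
  ext x
  constructor
  · rintro ⟨d, hd, rfl⟩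
    exact hkey d hd
  · intro hx
    refine ⟨x, ?_, (hCr x hx).symm⟩
    exact (NonUnitalStarSubalgebra.le_topologicalClosure _)
      (NonUnitalStarAlgebra.subset_adjoin ℂ _ (Or.inr hx))

/-- Lemma 5.2 (corner lemma): let `A ⊆ B` be a closed *-subalgebra, `r ∈ B` a projection
with `rA ⊆ A` and `Ar ⊆ A`, and let `C` be a closed *-subalgebra with `rAr ⊆ C` and
`rcr = c` for all `c ∈ C`. If `D` is the smallest norm-closed *-subalgebra containing
`A ∪ C`, then `rDr = C`; consequently two such `C, C'` generating (together with `A`) the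
same closed *-subalgebra must coincide. -/
theorem corner_lattice_embedding
    (B : Type*) [NonUnitalCStarAlgebra B]
    (A : NonUnitalStarSubalgebra ℂ B) (hA : IsClosed (A : Set B))
    (r : B) (hr : star r = r ∧ r * r = r)
    (hrA : ∀ a ∈ A, r * a ∈ A ∧ a * r ∈ A)
    (C : NonUnitalStarSubalgebra ℂ B) (hC : IsClosed (C : Set B))
    (hAC : ∀ a ∈ A, r * a * r ∈ C)
    (hCr : ∀ c ∈ C, r * c * r = c) :
    {x : B | ∃ d ∈ (NonUnitalStarAlgebra.adjoin ℂ ((A : Set B) ∪ (C : Set B))).topologicalClosure,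
        x = r * d * r} = (C : Set B) ∧
    ∀ C' : NonUnitalStarSubalgebra ℂ B, IsClosed (C' : Set B) →
      (∀ a ∈ A, r * a * r ∈ C') → (∀ c ∈ C', r * c * r = c) →
      (NonUnitalStarAlgebra.adjoin ℂ ((A : Set B) ∪ (C : Set B))).topologicalClosure =
        (NonUnitalStarAlgebra.adjoin ℂ ((A : Set B) ∪ (C' : Set B))).topologicalClosure →
      C = C' := by
  refine ⟨corner_aux B A r hr C hC hAC hCr, ?_⟩
  intro C' hC' hAC' hCr' heq
  have h1 := corner_aux B A r hr C hC hAC hCr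
  have h2 := corner_aux B A r hr C' hC' hAC' hCr'
  refine SetLike.ext' ?_
  rw [← h1, ← h2, heq]
end

section
/- Let S be a set, let Γ be the free group on S, and let ℤ[Γ] denote the integral group ring of Γ. Define the additive map ν : ⊕_{s∈S} ℤ[Γ] → ℤ[Γ] (direct sum of copies of ℤ[Γ] indexed by S, i.e. finitely supported families) by ν((x_s)_{s∈S}) = Σ_{s∈S} (x_s − s·x_s), where s·x_s denotes left multiplication of x_s by the group element s. Then ν is injective. -/
/-!
Because `F_S` is free, each generator `s` may act on `F_S × M` by `(γ, m) ↦ (s γ, c s γ + m)` for an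
arbitrary `c : S → F_S → M`; the second coordinate of the orbit of `(1, 0)` is then a potential
`d : F_S → M` with `d (s γ) = c s γ + d γ`. For `c s γ = -e_s γ` (so that `d` is minus the vector
of right Fox derivatives), the linear extension `r` of `d` to the group ring satisfies
`r (a - s a) = e_s a`, hence `r ∘ ν = id`.
-/

open MonoidAlgebra

namespace FreeGroup

variable {S M : Type*} [AddGroup M]

def cayleyStep (c : S → FreeGroup S → M) (s : S) : Equiv.Perm (FreeGroup S × M) where
  toFun p := (of s * p.1, c s p.1 + p.2)
  invFun p := ((of s)⁻¹ * p.1, -c s ((of s)⁻¹ * p.1) + p.2)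
  left_inv p := by simp
  right_inv p := by simp

def cayleyWalk (c : S → FreeGroup S → M) : FreeGroup S →* Equiv.Perm (FreeGroup S × M) :=
  lift (cayleyStep c)

lemma cayleyWalk_of (c : S → FreeGroup S → M) (s : S) : cayleyWalk c (of s) = cayleyStep c s :=
  lift_apply_of

lemma cayleyWalk_apply_fst (c : S → FreeGroup S → M) (γ : FreeGroup S) (p : FreeGroup S × M) :
    (cayleyWalk c γ p).1 = γ * p.1 := by
  induction γ using FreeGroup.induction_on generalizing p with
  | C1 => simp
  | of s => rfl
  | inv_of s _ => rfl
  | mul γ δ hγ hδ => simp [Equiv.Perm.mul_apply, hγ, hδ, mul_assoc]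

def cayleyPotential (c : S → FreeGroup S → M) (γ : FreeGroup S) : M :=
  (cayleyWalk c γ (1, 0)).2

lemma cayleyPotential_of_mul (c : S → FreeGroup S → M) (s : S) (γ : FreeGroup S) :
    cayleyPotential c (of s * γ) = c s γ + cayleyPotential c γ := by
  rw [cayleyPotential, _root_.map_mul, Equiv.Perm.mul_apply, cayleyWalk_of]
  change c s _ + _ = _
  rw [cayleyWalk_apply_fst, mul_one, cayleyPotential]

end FreeGroup

section FoxRetraction

variable (k S : Type*) [Ring k]

noncomputable def foxPotential (γ : FreeGroup S) : S →₀ MonoidAlgebra k (FreeGroup S) :=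
  FreeGroup.cayleyPotential (fun s δ ↦ -Finsupp.single s (of k _ δ)) γ

noncomputable def foxRetraction :
    MonoidAlgebra k (FreeGroup S) →ₗ[k] (S →₀ MonoidAlgebra k (FreeGroup S)) :=
  Finsupp.linearCombination k (foxPotential k S) ∘ₗ (coeffLinearEquiv k).toLinearMap

variable {k S}

lemma foxPotential_sub_of_mul (s : S) (γ : FreeGroup S) :
    foxPotential k S γ - foxPotential k S (FreeGroup.of s * γ) = Finsupp.single s (of k _ γ) := by
  rw [foxPotential, foxPotential, FreeGroup.cayleyPotential_of_mul, sub_add_cancel_right, neg_neg]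

lemma foxRetraction_single (γ : FreeGroup S) (a : k) :
    foxRetraction k S (single γ a) = a • foxPotential k S γ := by
  simp [foxRetraction]

lemma foxRetraction_sub_of_mul (s : S) (x : MonoidAlgebra k (FreeGroup S)) :
    foxRetraction k S (x - of k _ (FreeGroup.of s) * x) = Finsupp.single s x := by
  induction x using MonoidAlgebra.induction_linear with
  | zero => simp
  | add x y hx hy => rw [mul_add, add_sub_add_comm, map_add, hx, hy, Finsupp.single_add]
  | single γ a =>
    rw [of_apply, single_mul_single, one_mul, map_sub, foxRetraction_single, foxRetraction_single,
      ← smul_sub, foxPotential_sub_of_mul, Finsupp.smul_single, of_apply, smul_single', mul_one]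

lemma leftInverse_foxRetraction :
    Function.LeftInverse (foxRetraction k S)
      (fun x : S →₀ MonoidAlgebra k (FreeGroup S) ↦
        x.sum fun s a ↦ a - of k (FreeGroup S) (FreeGroup.of s) * a) := fun x ↦ by
  simp only [map_finsuppSum, foxRetraction_sub_of_mul, Finsupp.sum_single]

end FoxRetraction

/-- The map `ν : ⊕_{s∈S} ℤ[F_S] → ℤ[F_S]`, `(x_s) ↦ Σ_s (x_s − s·x_s)`, on the integral
group ring of the free group on `S`, is injective. -/
theorem freeGroup_nu_injective (S : Type*) :
    Function.Injective
      (fun x : S →₀ MonoidAlgebra ℤ (FreeGroup S) =>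
        x.sum fun s a =>
          a - MonoidAlgebra.of ℤ (FreeGroup S) (FreeGroup.of s) * a) :=
  leftInverse_foxRetraction.injective
end

section
/- Let G = SL(3, ℝ), the group of 3×3 real matrices of determinant 1. Let P = {A ∈ G : A_{ij} = 0 whenever i < j} (the lower triangular matrices in G) and Q = {A ∈ G : A_{12} = A_{13} = 0}. Then P and Q are subgroups of G with P ⊆ Q, and for every subgroup R of G with P ⊆ R ⊆ Q one has R = P or R = Q. -/
/-!
Inside `Q`, the Bruhat decomposition of the `GL₂`-block gives `Q = P ∪ P w P`, where `w` is the
signed transposition of the last two basis vectors. Hence a subgroup `P ≤ R ≤ Q` with an element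
outside `P` contains `w`, and then all of `P w P`, i.e. all of `Q`.
-/

open Matrix MatrixGroups DoubleCoset OrderDual

theorem Subgroup.eq_or_eq_of_forall_mem_doubleCoset {G : Type*} [Group G] {P Q R : Subgroup G}
    {w : G} (hQ : ∀ q ∈ Q, q ∉ P → q ∈ doubleCoset w P P) (hPR : P ≤ R) (hRQ : R ≤ Q) :
    R = P ∨ R = Q := by
  by_cases hRP : R ≤ P
  · exact .inl (le_antisymm hRP hPR)
  obtain ⟨g, hgR, hgP⟩ := SetLike.not_le_iff_exists.mp hRP
  have hwR : w ∈ R := by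
    obtain ⟨x, hx, y, hy, rfl⟩ := mem_doubleCoset.mp (hQ g (hRQ hgR) hgP)
    have := R.mul_mem (R.mul_mem (R.inv_mem (hPR hx)) hgR) (R.inv_mem (hPR hy))
    rwa [show x⁻¹ * (x * w * y) * y⁻¹ = w by group] at this
  refine .inr (le_antisymm hRQ fun q hq => ?_)
  by_cases hqP : q ∈ P
  · exact hPR hqP
  obtain ⟨x, hx, y, hy, rfl⟩ := mem_doubleCoset.mp (hQ q hq hqP)
  exact R.mul_mem (R.mul_mem (hPR hx) hwR) (hPR hy)

theorem Matrix.isLowerTriangular_fin_three {R : Type*} [Zero R] {A : Matrix (Fin 3) (Fin 3) R} :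
    A.IsLowerTriangular ↔ A 0 1 = 0 ∧ A 0 2 = 0 ∧ A 1 2 = 0 := by
  refine ⟨fun h => ⟨h (by decide), h (by decide), h (by decide)⟩, ?_⟩
  rintro ⟨h01, h02, h12⟩ i j hij
  fin_cases i <;> fin_cases j <;> first | assumption | exact absurd hij (by decide)

namespace Matrix.SpecialLinearGroup

variable {n R α : Type*} [Fintype n] [DecidableEq n] [CommRing R] [LinearOrder α]

def blockTriangular (b : n → α) : Subgroup (SpecialLinearGroup n R) where
  carrier := {A | (A : Matrix n n R).BlockTriangular b}
  one_mem' := blockTriangular_one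
  mul_mem' := BlockTriangular.mul
  inv_mem' {A} hA := by
    have : Invertible (A : Matrix n n R) :=
      invertibleOfRightInverse _ _ (congrArg Subtype.val (mul_inv_cancel A))
    have h : ((A⁻¹ : SpecialLinearGroup n R) : Matrix n n R) = (A : Matrix n n R)⁻¹ := by
      simp [coe_inv, inv_def, A.2]
    simpa [h] using blockTriangular_inv_of_blockTriangular hA

variable (n R) in
abbrev lowerTriangular [LinearOrder n] : Subgroup (SpecialLinearGroup n R) :=
  blockTriangular (toDual : n → nᵒᵈ)

variable (R) in
abbrev lowerParabolic₁₂ : Subgroup SL(3, R) := blockTriangular fun i : Fin 3 => decide (i = 0)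

theorem mem_lowerParabolic₁₂ {A : SL(3, R)} :
    A ∈ lowerParabolic₁₂ R ↔ A 0 1 = 0 ∧ A 0 2 = 0 := by
  refine ⟨fun h => ⟨h (by decide), h (by decide)⟩, ?_⟩
  rintro ⟨h01, h02⟩ i j hij
  fin_cases i <;> fin_cases j <;> first | assumption | exact absurd hij (by decide)

theorem lowerTriangular_le_lowerParabolic₁₂ : lowerTriangular (Fin 3) R ≤ lowerParabolic₁₂ R :=
  fun _ hA => mem_lowerParabolic₁₂.mpr ((isLowerTriangular_fin_three.mp hA).imp_right And.left)

variable (R) in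
def signedSwap₁₂ : SL(3, R) := ⟨!![1, 0, 0; 0, 0, -1; 0, 1, 0], by simp [det_fin_three]⟩

section Field

variable {K : Type*} [Field K]

theorem exists_isLowerTriangular_mul_signedSwap₁₂_mul
    {q : Matrix (Fin 3) (Fin 3) K} (h01 : q 0 1 = 0) (h02 : q 0 2 = 0) (h12 : q 1 2 ≠ 0) :
    ∃ L U : Matrix (Fin 3) (Fin 3) K, L.IsLowerTriangular ∧ U.IsLowerTriangular ∧ L.det = 1 ∧
      q = L * signedSwap₁₂ K * U := by
  -- `signedSwap₁₂ K * U` has the rows `U 0`, `-U 2`, `U 1`: so `U` carries rows `0` and `1`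
  -- of `q`, and `L` rebuilds row `2` of `q` by clearing `q 2 2` against the pivot `q 1 2`.
  refine ⟨!![1, 0, 0; 0, -1, 0; 0, -(q 2 2 / q 1 2), -1],
    !![q 0 0, 0, 0; q 2 2 * q 1 0 / q 1 2 - q 2 0, q 2 2 * q 1 1 / q 1 2 - q 2 1, 0;
      q 1 0, q 1 1, q 1 2],
    isLowerTriangular_fin_three.mpr (by simp), isLowerTriangular_fin_three.mpr (by simp),
    by simp [det_fin_three], ?_⟩
  ext i j
  fin_cases i <;> fin_cases j <;>
    simp [signedSwap₁₂, mul_apply, Fin.sum_univ_three, h01, h02] <;> field_simp <;> ring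

theorem mem_doubleCoset_signedSwap₁₂ {q : SL(3, K)}
    (hq : q ∈ lowerParabolic₁₂ K) (hqP : q ∉ lowerTriangular (Fin 3) K) :
    q ∈ doubleCoset (signedSwap₁₂ K) (lowerTriangular (Fin 3) K) (lowerTriangular (Fin 3) K) := by
  obtain ⟨h01, h02⟩ := mem_lowerParabolic₁₂.mp hq
  have h12 : q 1 2 ≠ 0 := fun h12 => hqP (isLowerTriangular_fin_three.mpr ⟨h01, h02, h12⟩)
  obtain ⟨L, U, hL, hU, hLdet, hLU⟩ := exists_isLowerTriangular_mul_signedSwap₁₂_mul h01 h02 h12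
  have hUdet : U.det = 1 := by
    have := congrArg det hLU
    rwa [det_mul, det_mul, hLdet, (signedSwap₁₂ K).2, q.2, one_mul, one_mul, eq_comm] at this
  exact mem_doubleCoset.mpr ⟨⟨L, hLdet⟩, hL, ⟨U, hUdet⟩, hU, Subtype.ext hLU⟩

theorem eq_lowerTriangular_or_eq_lowerParabolic₁₂ {R : Subgroup SL(3, K)}
    (hPR : lowerTriangular (Fin 3) K ≤ R) (hRQ : R ≤ lowerParabolic₁₂ K) :
    R = lowerTriangular (Fin 3) K ∨ R = lowerParabolic₁₂ K :=
  Subgroup.eq_or_eq_of_forall_mem_doubleCoset (fun _ => mem_doubleCoset_signedSwap₁₂) hPR hRQ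

end Field

end Matrix.SpecialLinearGroup

/-- In `G = SL(3, ℝ)`, the lower triangular subgroup `P` and the subgroup
`Q = {A : A₁₂ = A₁₃ = 0}` satisfy `P ⊆ Q`, and the inclusion `P ⊆ Q` has no proper
intermediate subgroups. -/
theorem sl3_no_proper_intermediate_subgroup :
    ∃ P Q : Subgroup (Matrix.SpecialLinearGroup (Fin 3) ℝ),
      (P : Set (Matrix.SpecialLinearGroup (Fin 3) ℝ)) =
        {A : Matrix.SpecialLinearGroup (Fin 3) ℝ |
          ∀ i j : Fin 3, i < j → (A : Matrix (Fin 3) (Fin 3) ℝ) i j = 0} ∧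
      (Q : Set (Matrix.SpecialLinearGroup (Fin 3) ℝ)) =
        {A : Matrix.SpecialLinearGroup (Fin 3) ℝ |
          (A : Matrix (Fin 3) (Fin 3) ℝ) 0 1 = 0 ∧
          (A : Matrix (Fin 3) (Fin 3) ℝ) 0 2 = 0} ∧
      P ≤ Q ∧
      ∀ R : Subgroup (Matrix.SpecialLinearGroup (Fin 3) ℝ),
        P ≤ R → R ≤ Q → R = P ∨ R = Q := by
  refine ⟨SpecialLinearGroup.lowerTriangular (Fin 3) ℝ, SpecialLinearGroup.lowerParabolic₁₂ ℝ,
    rfl, Set.ext fun _ => SpecialLinearGroup.mem_lowerParabolic₁₂,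
    SpecialLinearGroup.lowerTriangular_le_lowerParabolic₁₂,
    fun _ => SpecialLinearGroup.eq_lowerTriangular_or_eq_lowerParabolic₁₂⟩
end

section
/- Let X be a topological space and let G be a group acting on X. Assume that for all x, y ∈ X with x ≠ y, the set {(g·x, g·y) : g ∈ G} is dense in {(u, v) ∈ X × X : u ≠ v}. Let R ⊆ X × X be a closed set that contains the diagonal {(x, x) : x ∈ X} and is G-invariant, i.e. (x, y) ∈ R implies (g·x, g·y) ∈ R for all g ∈ G. If R is contained in the diagonal then R equals the diagonal; otherwise R = X × X. In particular every G-invariant closed equivalence relation on X is either the diagonal or all of X × X. -/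
/-- If a group `G` acts on a topological space `X` so that the diagonal action on pairs of
distinct points has dense orbits in the complement of the diagonal, then every `G`-invariant
closed subset `R ⊆ X × X` containing the diagonal is either the diagonal or all of
`X × X`. In particular every `G`-invariant closed equivalence relation on `X` is trivial. -/
theorem invariant_closed_relation_trivial
    (X : Type*) [TopologicalSpace X] (G : Type*) [Group G] [MulAction G X]
    (hdense : ∀ x y : X, x ≠ y →
      {p : X × X | p.1 ≠ p.2} ⊆
        closure {p : X × X | ∃ g : G, p = (g • x, g • y)})
    (R : Set (X × X)) (hclosed : IsClosed R)
    (hdiag : Set.diagonal X ⊆ R)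
    (hinv : ∀ x y : X, (x, y) ∈ R → ∀ g : G, (g • x, g • y) ∈ R) :
    R = Set.diagonal X ∨ R = Set.univ := by
  by_cases h : R ⊆ Set.diagonal X
  · exact Or.inl (le_antisymm h hdiag)
  · right
    obtain ⟨⟨x, y⟩, hxyR, hxyd⟩ := Set.not_subset.mp h
    have hxy : x ≠ y := fun e => hxyd (by simpa [Set.diagonal] using e)
    have horb : {p : X × X | ∃ g : G, p = (g • x, g • y)} ⊆ R := by
      rintro p ⟨g, rfl⟩
      exact hinv x y hxyR g
    have hcl : closure {p : X × X | ∃ g : G, p = (g • x, g • y)} ⊆ R :=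
      hclosed.closure_subset_iff.mpr horb
    ext ⟨a, b⟩
    simp only [Set.mem_univ, iff_true]
    by_cases hab : a = b
    · exact hdiag (by simp [Set.diagonal, hab])
    · exact hcl (hdense x y hxy hab)
end
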